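/- arXiv:2307.00107 — 5 statements merged into one kernel-verified Lean document; each statement's English description precedes it below -/
import Mathlib

section
/- Let t, u ∈ ℂ with t ≠ 0, and let W be a product of matrices each equal to C^{±1} or D^{±1} where C = [[t, 1],[0, t⁻¹]] and D = [[t, 0],[−u, t⁻¹]], such that the sequence of exponents (ε₁,…,ε_{2m}) is palindromic (ε_i = ε_{2m+1−i}) and alternates between C-letters and D-letters starting with C and ending with D. If u ≠ 0 and α² = −u with V = [[α,0],[0,α⁻¹]], then V W V⁻¹ = Wᵀ; consequently the entries of W = [[a,b],[c,d]] satisfy c = −u·b. -/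
open Matrix

private theorem ofFn_reverse' {n : ℕ} {α : Type*} (f : Fin n → α) :
    (List.ofFn f).reverse = List.ofFn (fun i => f i.rev) := by
  apply List.ext_getElem <;> simp [List.getElem_reverse, Fin.rev]
  intro i h1
  congr 1
  apply Fin.ext
  simp
  omega

private theorem conj_prod' {n : Type*} [Fintype n] [DecidableEq n] (V Vi : Matrix n n ℂ)
    (h : Vi * V = 1) (L : List (Matrix n n ℂ)) :
    V * L.prod * Vi = (L.map (fun X => V * X * Vi)).prod := by
  induction L with
  | nil => simp [mul_eq_one_comm.mp h]
  | cons x l ih =>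
    simp only [List.prod_cons, List.map_cons, ← ih]
    have : V * x * Vi * (V * l.prod * Vi) = V * x * ((Vi * V) * (l.prod * Vi)) := by
      simp only [mul_assoc]
    rw [this, h, one_mul, ← mul_assoc, ← mul_assoc]

private theorem transpose_fin_two' (a b c d : ℂ) : (!![a,b;c,d])ᵀ = !![a,c;b,d] := by
  ext i j
  fin_cases i <;> fin_cases j <;> rfl

private theorem conj_diag' (a b c d x y : ℂ) (hxy : x * y = 1) :
    !![x,0;0,y] * !![a,b;c,d] * !![y,0;0,x] = !![a, x*x*b; y*y*c, d] := by
  ext i j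
  fin_cases i <;> fin_cases j <;>
    simp [Matrix.mul_apply, Fin.sum_univ_succ] <;>
    [linear_combination a * hxy; ring; ring; linear_combination d * hxy]

/-- Riley's symmetry lemma: let `W` be an alternating word
`C^{e₁} D^{e₂} ⋯ C^{e_{2m-1}} D^{e_{2m}}` (C-letters in the odd positions,
D-letters in the even positions) whose exponent sequence `e : Fin (2m) → ℤ`
takes values `±1` and is palindromic.  If `u ≠ 0` and `α² = -u`, then with
`V = [[α,0],[0,α⁻¹]]` we have `V W V⁻¹ = Wᵀ`, and consequently
`W 1 0 = -u * W 0 1`. -/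
theorem riley_word_symmetry (t u α : ℂ) (ht : t ≠ 0) (hu : u ≠ 0) (hα : α ^ 2 = -u)
    (m : ℕ) (e : Fin (2 * m) → ℤ)
    (he : ∀ i, e i = 1 ∨ e i = -1)
    (hpal : ∀ i : Fin (2 * m), ∀ j : Fin (2 * m), (i : ℕ) + (j : ℕ) = 2 * m - 1 → e i = e j) :
    let C : Matrix (Fin 2) (Fin 2) ℂ := !![t, 1; 0, t⁻¹]
    let D : Matrix (Fin 2) (Fin 2) ℂ := !![t, 0; -u, t⁻¹]
    let V : Matrix (Fin 2) (Fin 2) ℂ := !![α, 0; 0, α⁻¹]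
    let W : Matrix (Fin 2) (Fin 2) ℂ :=
      (List.ofFn (fun i : Fin (2 * m) =>
        if (i : ℕ) % 2 = 0 then (if e i = 1 then C else C⁻¹)
        else (if e i = 1 then D else D⁻¹))).prod
    V * W * V⁻¹ = Wᵀ ∧ W 1 0 = -u * W 0 1 := by
  intro C D V W
  have hαne : α ≠ 0 := by
    intro h; rw [h] at hα; simp at hα; exact hu hα
  have hαα : α * α⁻¹ = 1 := mul_inv_cancel₀ hαne
  have hα2 : α * α = -u := by rw [← sq]; exact hα
  have hαi2 : α⁻¹ * α⁻¹ * -u = 1 := by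
    rw [← hα2]; field_simp
  have hC : C = !![t, 1; 0, t⁻¹] := rfl
  have hD : D = !![t, 0; -u, t⁻¹] := rfl
  set Vi : Matrix (Fin 2) (Fin 2) ℂ := !![α⁻¹, 0; 0, α] with hVi
  have hViV : Vi * V = 1 := by
    simp [hVi, V, Matrix.mul_fin_two, inv_mul_cancel₀ hαne, mul_inv_cancel₀ hαne,
      Matrix.one_fin_two]
  have hVinv : V⁻¹ = Vi := Matrix.inv_eq_right_inv (mul_eq_one_comm.mp hViV)
  have hCi : C⁻¹ = !![t⁻¹, -1; 0, t] := by
    apply Matrix.inv_eq_right_inv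
    simp [C, Matrix.mul_fin_two, mul_inv_cancel₀ ht, inv_mul_cancel₀ ht, Matrix.one_fin_two]
  have hDi : D⁻¹ = !![t⁻¹, 0; u, t] := by
    apply Matrix.inv_eq_right_inv
    simp [D, Matrix.mul_fin_two, mul_inv_cancel₀ ht, inv_mul_cancel₀ ht, Matrix.one_fin_two]
    ring
  -- the four conjugation identities
  have hvc : V * C * Vi = Dᵀ := by
    rw [show V * C * Vi = !![t, α*α*1; α⁻¹*α⁻¹*0, t⁻¹] from conj_diag' _ _ _ _ _ _ hαα]
    rw [hD, transpose_fin_two', hα2]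
    norm_num
  have hvd : V * D * Vi = Cᵀ := by
    rw [show V * D * Vi = !![t, α*α*0; α⁻¹*α⁻¹*(-u), t⁻¹] from conj_diag' _ _ _ _ _ _ hαα]
    rw [hC, transpose_fin_two', hαi2]
    norm_num
  have hvci : V * C⁻¹ * Vi = (D⁻¹)ᵀ := by
    rw [hCi, hDi, show V * !![t⁻¹, -1; 0, t] * Vi = !![t⁻¹, α*α*(-1); α⁻¹*α⁻¹*0, t]
      from conj_diag' _ _ _ _ _ _ hαα]
    rw [transpose_fin_two', hα2]
    norm_num
  have hvdi : V * D⁻¹ * Vi = (C⁻¹)ᵀ := by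
    rw [hCi, hDi, show V * !![t⁻¹, 0; u, t] * Vi = !![t⁻¹, α*α*0; α⁻¹*α⁻¹*u, t]
      from conj_diag' _ _ _ _ _ _ hαα]
    rw [transpose_fin_two']
    have : α⁻¹*α⁻¹*u = -1 := by
      have := hαi2; linear_combination -this
    rw [this]
    norm_num
  set f : Fin (2*m) → Matrix (Fin 2) (Fin 2) ℂ := fun i =>
    if (i : ℕ) % 2 = 0 then (if e i = 1 then C else C⁻¹)
    else (if e i = 1 then D else D⁻¹) with hf
  have claim : ∀ i, V * f i * Vi = (f i.rev)ᵀ := by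
    intro i
    have hlt : (i : ℕ) < 2 * m := i.isLt
    have hrev : ((i.rev : Fin (2*m)) : ℕ) = 2 * m - (i + 1) := Fin.val_rev i
    have hei : e i.rev = e i := hpal i.rev i (by omega)
    by_cases hp : (i : ℕ) % 2 = 0
    · have hp' : ¬ ((i.rev : Fin (2*m)) : ℕ) % 2 = 0 := by omega
      rcases he i with h1 | h1
      · simp only [hf, hp, hp', if_true, if_false, hei, h1]
        simpa using hvc
      · have h1' : ¬ e i = 1 := by rw [h1]; decide
        simp only [hf, hp, hp', if_true, if_false, hei, h1', if_neg]
        exact hvci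
    · have hp' : ((i.rev : Fin (2*m)) : ℕ) % 2 = 0 := by omega
      rcases he i with h1 | h1
      · simp only [hf, hp, hp', if_true, if_false, hei, h1]
        simpa using hvd
      · have h1' : ¬ e i = 1 := by rw [h1]; decide
        simp only [hf, hp, hp', if_true, if_false, hei, h1', if_neg]
        exact hvdi
  have hmain : V * W * V⁻¹ = Wᵀ := by
    rw [hVinv]
    have h1 : V * W * Vi = (List.ofFn fun i => V * f i * Vi).prod := by
      rw [show W = (List.ofFn f).prod from rfl, conj_prod' V Vi hViV, List.map_ofFn]
      rfl
    have h2 : Wᵀ = (List.ofFn fun i => (f i.rev)ᵀ).prod := by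
      rw [show W = (List.ofFn f).prod from rfl, Matrix.transpose_list_prod, List.map_ofFn,
        ofFn_reverse']
      rfl
    rw [h1, h2]
    congr 1
    exact congrArg List.ofFn (funext claim)
  refine ⟨hmain, ?_⟩
  rw [hVinv] at hmain
  have h01 := congrFun (congrFun hmain 0) 1
  simp only [Matrix.mul_apply, Fin.sum_univ_succ, Fin.sum_univ_zero, Matrix.transpose_apply,
    hVi, V] at h01
  simp [Matrix.cons_val_zero, Matrix.cons_val_one] at h01
  linear_combination W 0 1 * hα2 - h01
end

section
/- Let t = 1 or t = −1, u ∈ ℂ, C = [[t, 1],[0, t⁻¹]], D = [[t, 0],[−u, t⁻¹]], X = [[t − t⁻¹, 1],[−u, t⁻¹ − t]], and let W = [[a, b],[c, d]] be a 2×2 complex matrix with det W = 1, c = −u·b, and W C = D W. Then for any even integer N, the equation C^N X W = W⁻¹ X has no solution. -/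
open Matrix

lemma unip_zpow (t : ℂ) (h : t * t = 1) (m : ℤ) :
    (!![t, 1; 0, t] : Matrix (Fin 2) (Fin 2) ℂ) ^ (2 * m) = !![1, 2 * m * t; 0, 1] := by
  have hd : IsUnit (!![t, 1; 0, t] : Matrix (Fin 2) (Fin 2) ℂ).det := by
    simp [Matrix.det_fin_two_of, h]
  have hinv : (!![t, 1; 0, t] : Matrix (Fin 2) (Fin 2) ℂ)⁻¹ = !![t, -1; 0, t] := by
    apply inv_eq_right_inv
    ext i j
    fin_cases i <;> fin_cases j <;>
      simp [Matrix.mul_apply, Fin.sum_univ_two, h]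
  induction m using Int.induction_on with
  | zero => simp [Matrix.one_fin_two]
  | succ k ih =>
      have e : 2 * ((k : ℤ) + 1) = (2 * k + 1) + 1 := by ring
      rw [e, Matrix.zpow_add_one hd, Matrix.zpow_add_one hd, ih]
      ext i j
      fin_cases i <;> fin_cases j <;>
        simp [Matrix.mul_apply, Fin.sum_univ_two] <;>
        first
          | ring1
          | linear_combination h
          | linear_combination (2 * t * (k:ℂ)) * h
  | pred k ih =>
      have e : 2 * (-(k : ℤ) - 1) = (2 * (-k) - 1) - 1 := by ring
      rw [e, Matrix.zpow_sub_one hd, Matrix.zpow_sub_one hd, ih, hinv]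
      ext i j
      fin_cases i <;> fin_cases j <;>
        simp [Matrix.mul_apply, Fin.sum_univ_two] <;>
        first
          | ring1
          | linear_combination h
          | linear_combination (-2 * t * (k:ℂ)) * h

/-- For `t = ±1`, there is no matrix `W = [[a,b],[c,d]]` with `det W = 1`,
`c = -u·b` and `WC = DW` that also satisfies `C^N X W = W⁻¹ X` for an even
integer `N`. -/
theorem no_solutions_t_eq_pm_one (t u : ℂ) (ht : t = 1 ∨ t = -1) (N : ℤ) (hN : Even N)
    (a b c d : ℂ) :
    let C : Matrix (Fin 2) (Fin 2) ℂ := !![t, 1; 0, t⁻¹]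
    let D : Matrix (Fin 2) (Fin 2) ℂ := !![t, 0; -u, t⁻¹]
    let X : Matrix (Fin 2) (Fin 2) ℂ := !![t - t⁻¹, 1; -u, t⁻¹ - t]
    let W : Matrix (Fin 2) (Fin 2) ℂ := !![a, b; c, d]
    W.det = 1 → c = -u * b → W * C = D * W → ¬ (C ^ N * X * W = W⁻¹ * X) := by
  intro C D X W hdet hc hWC heq
  have ht1 : t⁻¹ = t := by rcases ht with rfl | rfl <;> norm_num
  have ht2 : t * t = 1 := by rcases ht with rfl | rfl <;> norm_num
  -- a = 0
  have h01 := congrFun (congrFun hWC 0) 1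
  simp [C, D, W, Matrix.mul_apply, Fin.sum_univ_two, ht1] at h01
  have ha : a = 0 := by linear_combination h01
  -- det gives u * b * b = 1
  have hdet' : a * d - b * c = 1 := by
    simpa [W, Matrix.det_fin_two_of] using hdet
  have hub : u * b * b = 1 := by
    rw [ha, hc] at hdet'; linear_combination hdet'
  -- inverse of W
  have hWinv : W⁻¹ = !![d, -b; -c, a] := by
    apply inv_eq_right_inv
    ext i j
    fin_cases i <;> fin_cases j <;>
      simp [W, Matrix.mul_apply, Fin.sum_univ_two] <;>
        first
          | ring1
          | linear_combination hdet'
  -- C ^ N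
  obtain ⟨m, rfl⟩ := hN
  have hmm : (m + m : ℤ) = 2 * m := by ring
  have hCN : C ^ (m + m) = !![1, 2 * m * t; 0, 1] := by
    rw [hmm]
    have : C = !![t, 1; 0, t] := by rw [show C = !![t,1;0,t⁻¹] from rfl, ht1]
    rw [this]
    exact unip_zpow t ht2 m
  rw [hCN, hWinv] at heq
  have h00 := congrFun (congrFun heq 0) 0
  simp [C, D, X, W, Matrix.mul_apply, Fin.sum_univ_two, ht1, ha, hc] at h00
  -- h00 should give u*b = -u*b, contradicting u*b*b = 1
  have : (1 : ℂ) = 0 := by linear_combination -hub - (b/2) * h00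
  exact one_ne_zero this
end

section
/- Let t ∈ ℂ with t ∉ {0, 1, −1}, u ∈ ℂ with (t − t⁻¹)² ≠ u, and N ∈ ℤ. Let C = [[t, 1],[0, t⁻¹]], D = [[t, 0],[−u, t⁻¹]], X = [[t − t⁻¹, 1],[−u, t⁻¹ − t]]. Let W = [[a, b],[c, d]] be a 2×2 complex matrix with det W = 1 and c = −u·b. Then the pair of matrix equations (C^N X W = W⁻¹ X and W C = D W) holds if and only if a = (t − t⁻¹)·b and t^N·((t − t⁻¹)² − u)·b² = 1. -/
open Matrix

lemma key1 (t x : ℂ) (ht0 : t ≠ 0) (hx : x ≠ 0) (hτ : t - t⁻¹ ≠ 0) :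
    x + (x - x⁻¹)/(t - t⁻¹) * t⁻¹ = (x*t - (x*t)⁻¹)/(t - t⁻¹) := by
  rw [eq_div_iff hτ, add_mul, mul_right_comm, div_mul_cancel₀ _ hτ]
  field_simp
  ring

lemma key2 (t x : ℂ) (ht0 : t ≠ 0) (hx : x ≠ 0) (hτ : t - t⁻¹ ≠ 0) :
    -x + (x - x⁻¹)/(t - t⁻¹) * t = (x*t⁻¹ - (x*t⁻¹)⁻¹)/(t - t⁻¹) := by
  rw [eq_div_iff hτ, add_mul, mul_right_comm, div_mul_cancel₀ _ hτ]
  field_simp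
  ring

set_option maxHeartbeats 1000000 in
lemma cpow_formula (t : ℂ) (ht0 : t ≠ 0) (hτ : t - t⁻¹ ≠ 0) (N : ℤ) :
    (!![t, 1; 0, t⁻¹] : Matrix (Fin 2) (Fin 2) ℂ) ^ N =
      !![t ^ N, (t ^ N - t ^ (-N)) / (t - t⁻¹); 0, t ^ (-N)] := by
  have hdet : IsUnit (!![t, 1; 0, t⁻¹] : Matrix (Fin 2) (Fin 2) ℂ).det := by
    simp [Matrix.det_fin_two_of, mul_inv_cancel₀ ht0]
  induction N using Int.induction_on with
  | zero => simp [Matrix.one_fin_two]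
  | succ n ih =>
      rw [Matrix.zpow_add_one hdet, ih, Matrix.mul_fin_two]
      have hn0 : (t : ℂ) ^ n ≠ 0 := pow_ne_zero _ ht0
      have h1 : t ^ ((n : ℤ) + 1) = t ^ n * t := by
        rw [zpow_add_one₀ ht0, zpow_natCast]
      have h3 : t ^ (-(n : ℤ)) = (t ^ n)⁻¹ := by rw [zpow_neg t, zpow_natCast]
      have h2 : t ^ (-((n : ℤ) + 1)) = (t ^ n * t)⁻¹ := by
        rw [zpow_neg t, zpow_add_one₀ ht0, zpow_natCast]
      have h4 : t ^ (n : ℤ) = t ^ n := zpow_natCast t n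
      rw [← Matrix.ext_iff]
      simp only [Fin.forall_fin_two, Matrix.cons_val', Matrix.cons_val_zero,
        Matrix.cons_val_one, Matrix.head_cons, Matrix.head_fin_const, Matrix.empty_val',
        Matrix.cons_val_fin_one, Matrix.of_apply, h1, h2, h3, h4]
      refine ⟨⟨?_, ?_⟩, ?_, ?_⟩
      · ring
      · linear_combination key1 t (t^n) ht0 hn0 hτ
      · ring
      · rw [mul_inv]; ring
  | pred n ih =>
      rw [Matrix.zpow_sub_one hdet, ih]
      have hCinv : (!![t, 1; 0, t⁻¹] : Matrix (Fin 2) (Fin 2) ℂ)⁻¹ = !![t⁻¹, -1; 0, t] := by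
        apply Matrix.inv_eq_right_inv
        rw [Matrix.mul_fin_two, Matrix.one_fin_two]
        congr 1 <;> field_simp <;> simp
      rw [hCinv, Matrix.mul_fin_two]
      have hn0 : (t : ℂ) ^ (-(n:ℤ)) ≠ 0 := zpow_ne_zero _ ht0
      have h5 : t ^ (-(-(n:ℤ))) = (t ^ (-(n:ℤ)))⁻¹ := zpow_neg t _
      have h1 : t ^ (-(n : ℤ) - 1) = t ^ (-(n:ℤ)) * t⁻¹ := by
        rw [zpow_sub_one₀ ht0]
      have h2 : t ^ (-(-(n : ℤ) - 1)) = (t ^ (-(n:ℤ)) * t⁻¹)⁻¹ := by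
        rw [← h1, zpow_neg t]
      rw [← Matrix.ext_iff]
      simp only [Fin.forall_fin_two, Matrix.cons_val', Matrix.cons_val_zero,
        Matrix.cons_val_one, Matrix.head_cons, Matrix.head_fin_const, Matrix.empty_val',
        Matrix.cons_val_fin_one, Matrix.of_apply, h1, h2, h5]
      refine ⟨⟨?_, ?_⟩, ?_, ?_⟩
      · ring
      · linear_combination key2 t (t^(-(n:ℤ))) ht0 hn0 hτ
      · ring
      · rw [mul_inv, inv_inv]; ring


/-- Reduction of the surgery equations to two scalar equations: for
`t ∉ {0, 1, -1}` and `(t - t⁻¹)² ≠ u`, and `W = [[a,b],[c,d]]` with `det W = 1`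
and `c = -u·b`, the pair of matrix equations `C^N X W = W⁻¹ X` and `WC = DW`
holds iff `a = (t - t⁻¹)·b` and `t^N ((t - t⁻¹)² - u) b² = 1`. -/
theorem surgery_equations_reduction (t u : ℂ) (ht0 : t ≠ 0) (ht1 : t ≠ 1) (htm1 : t ≠ -1)
    (hu : (t - t⁻¹) ^ 2 ≠ u) (N : ℤ) (a b c d : ℂ) :
    let C : Matrix (Fin 2) (Fin 2) ℂ := !![t, 1; 0, t⁻¹]
    let D : Matrix (Fin 2) (Fin 2) ℂ := !![t, 0; -u, t⁻¹]
    let X : Matrix (Fin 2) (Fin 2) ℂ := !![t - t⁻¹, 1; -u, t⁻¹ - t]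
    let W : Matrix (Fin 2) (Fin 2) ℂ := !![a, b; c, d]
    W.det = 1 → c = -u * b →
      ((C ^ N * X * W = W⁻¹ * X ∧ W * C = D * W) ↔
        (a = (t - t⁻¹) * b ∧ t ^ N * ((t - t⁻¹) ^ 2 - u) * b ^ 2 = 1)) := by
  intro C D X W hdet hc
  have hτ : t - t⁻¹ ≠ 0 := by
    intro h
    have h2 : (t - 1) * (t + 1) = 0 := by
      field_simp at h
      linear_combination h
    rcases mul_eq_zero.mp h2 with h3 | h3
    · exact ht1 (by linear_combination h3)
    · exact htm1 (by linear_combination h3)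
  have hT0 : (t : ℂ) ^ N ≠ 0 := zpow_ne_zero _ ht0
  have hTT : t ^ N * (t ^ N)⁻¹ = 1 := mul_inv_cancel₀ hT0
  have hdet' : a * d - b * c = 1 := by
    simpa [W, Matrix.det_fin_two_of] using hdet
  have hWinv : W⁻¹ = !![d, -b; -c, a] := by
    apply Matrix.inv_eq_right_inv
    show (!![a, b; c, d] : Matrix (Fin 2) (Fin 2) ℂ) * _ = _
    rw [Matrix.mul_fin_two, Matrix.one_fin_two, ← Matrix.ext_iff]
    simp only [Fin.forall_fin_two, Matrix.cons_val', Matrix.cons_val_zero,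
      Matrix.cons_val_one, Matrix.head_cons, Matrix.head_fin_const, Matrix.empty_val',
      Matrix.cons_val_fin_one, Matrix.of_apply]
    exact ⟨⟨by linear_combination hdet', by ring⟩, by ring, by linear_combination hdet'⟩
  unfold W at hWinv
  unfold C D X W
  rw [cpow_formula t ht0 hτ N, hWinv]
  simp only [_root_.zpow_neg, Matrix.mul_fin_two, ← Matrix.ext_iff, Fin.forall_fin_two,
    Matrix.cons_val', Matrix.cons_val_zero, Matrix.cons_val_one, Matrix.head_cons,
    Matrix.head_fin_const, Matrix.empty_val', Matrix.cons_val_fin_one, Matrix.of_apply]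
  constructor
  · rintro ⟨⟨⟨g1, g2⟩, g3, g4⟩, ⟨f1, f2⟩, f3, f4⟩
    have ha : a = (t - t⁻¹) * b := by linear_combination f2
    rw [hc, ha] at g4 hdet'
    refine ⟨ha, ?_⟩
    linear_combination (t ^ N * b) * g4 + hdet' +
      ((t - t⁻¹) * b * d + u * b ^ 2) * hTT
  · rintro ⟨ha, hg⟩
    subst hc
    subst ha
    have hb : b ≠ 0 := by
      intro h
      rw [h] at hg
      simp at hg
    have hSτ : (t ^ N - (t ^ N)⁻¹) / (t - t⁻¹) * (t - t⁻¹) = t ^ N - (t ^ N)⁻¹ :=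
      div_mul_cancel₀ _ hτ
    refine ⟨⟨⟨?_, ?_⟩, ?_, ?_⟩, ⟨?_, ?_⟩, ?_, ?_⟩
    · apply mul_left_cancel₀ hb
      linear_combination hg - hdet'
    · apply mul_left_cancel₀ (mul_ne_zero hτ hb)
      linear_combination (1 - (t ^ N)⁻¹) * hg + ((t ^ N)⁻¹ - 1) * hdet' +
        ((t - t⁻¹) ^ 2 - u) * b ^ 2 * hTT - (u * b ^ 2 + (t - t⁻¹) * b * d) * hSτ
    · ring
    · apply mul_left_cancel₀ (mul_ne_zero hT0 hb)
      linear_combination hg - hdet' - ((t - t⁻¹) * b * d + u * b ^ 2) * hTT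
    · ring
    · ring
    · ring
    · ring
end

section
/- Let t ∈ ℝ with t > 1, let α, β be integers with β ≠ 0, and let M be a 2×2 real matrix. Define C and C_{α/β} as the upper-triangular matrices C = [[t, 1],[0, t⁻¹]] and C_{α/β} = [[t^{α/β}, (t^{α/β} − t^{−α/β})/(t − t⁻¹)],[0, t^{−α/β}]]. If M commutes with C^α and α ≠ 0, then M commutes with C_{α/β}. -/
open Matrix

lemma Cpow (t : ℝ) (ht : 1 < t) (n : ℕ) :
    (!![t, 1; 0, t⁻¹] : Matrix (Fin 2) (Fin 2) ℝ) ^ n =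
      !![t ^ n, (t ^ n - t⁻¹ ^ n) / (t - t⁻¹); 0, t⁻¹ ^ n] := by
  have ht' : t ≠ 0 := by positivity
  have hne : t - t⁻¹ ≠ 0 := by
    have : t⁻¹ < 1 := inv_lt_one_of_one_lt₀ ht
    nlinarith
  induction n with
  | zero => simp [Matrix.one_fin_two]
  | succ n ih =>
      rw [pow_succ, ih]
      ext i j
      fin_cases i <;> fin_cases j <;>
        simp [Matrix.mul_apply, Fin.sum_univ_succ, inv_pow] <;>
        rw [pow_succ] <;>
        first
          | (rw [eq_div_iff hne, add_mul, div_mul_eq_mul_div, div_mul_cancel₀ _ hne]; ring)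
          | rw [mul_inv]

lemma Czpow (t : ℝ) (ht : 1 < t) (α : ℤ) :
    (!![t, 1; 0, t⁻¹] : Matrix (Fin 2) (Fin 2) ℝ) ^ α =
      !![t ^ α, (t ^ α - t ^ (-α)) / (t - t⁻¹); 0, t ^ (-α)] := by
  have ht' : t ≠ 0 := by positivity
  rcases α with n | n
  · rw [Int.ofNat_eq_coe, zpow_natCast, Cpow t ht n]
    norm_num [zpow_natCast, _root_.zpow_neg, inv_pow]
  · rw [zpow_negSucc, Cpow t ht (n+1), Matrix.inv_def, Matrix.adjugate_fin_two,
      Matrix.det_fin_two_of]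
    have hdet : t ^ (n+1) * t⁻¹ ^ (n+1) - (t ^ (n+1) - t⁻¹ ^ (n+1)) / (t - t⁻¹) * 0 = 1 := by
      rw [mul_zero, sub_zero, ← mul_pow, mul_inv_cancel₀ ht', one_pow]
    rw [hdet]
    have h1 : t ^ (Int.negSucc n) = t⁻¹ ^ (n+1) := by
      rw [zpow_negSucc, inv_pow]
    have h2 : t ^ (-(Int.negSucc n)) = t ^ (n+1) := by
      rw [Int.neg_negSucc, zpow_natCast]
    ext i j
    fin_cases i <;> fin_cases j <;>
      simp [h1, h2, zpow_add₀ ht', zpow_natCast] <;> ring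


/-- If a real 2×2 matrix `M` commutes with `C^α` (`α ≠ 0`), then it commutes
with the fractional power matrix `C_{α/β}`. -/
theorem commutes_with_Cab (t : ℝ) (ht : 1 < t) (α β : ℤ) (hα : α ≠ 0) (hβ : β ≠ 0)
    (M : Matrix (Fin 2) (Fin 2) ℝ) :
    let C : Matrix (Fin 2) (Fin 2) ℝ := !![t, 1; 0, t⁻¹]
    let Cab : Matrix (Fin 2) (Fin 2) ℝ :=
      !![t ^ ((α : ℝ) / (β : ℝ)),
         (t ^ ((α : ℝ) / (β : ℝ)) - t ^ (-((α : ℝ) / (β : ℝ)))) / (t - t⁻¹);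
         0, t ^ (-((α : ℝ) / (β : ℝ)))]
    M * C ^ α = C ^ α * M → M * Cab = Cab * M := by
  intro C Cab hcomm
  have ht0 : (0:ℝ) < t := lt_trans one_pos ht
  have ht' : t ≠ 0 := ne_of_gt ht0
  have hne : t - t⁻¹ ≠ 0 := by
    have : t⁻¹ < 1 := inv_lt_one_of_one_lt₀ ht
    nlinarith
  have hs : (t - t⁻¹) * (t - t⁻¹)⁻¹ = 1 := mul_inv_cancel₀ hne
  rw [show C = !![t, 1; 0, t⁻¹] from rfl, Czpow t ht α] at hcomm
  have hp0 : (0:ℝ) < t ^ α := zpow_pos ht0 α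
  have hzα : t ^ α - (t ^ α)⁻¹ ≠ 0 := by
    intro h
    have h2 : t ^ α = t ^ (-α) := by
      rw [_root_.zpow_neg]; linarith [sub_eq_zero.mp h]
    have := zpow_right_injective₀ ht0 (ne_of_gt ht) h2
    omega
  have e10 := congrFun (congrFun hcomm 1) 0
  have e01 := congrFun (congrFun hcomm 0) 1
  simp [Matrix.mul_apply, Fin.sum_univ_succ, _root_.zpow_neg] at e10 e01
  have hm10 : M 1 0 = 0 := by
    have h : M 1 0 * (t ^ α - (t ^ α)⁻¹) = 0 := by linear_combination e10
    exact (mul_eq_zero.mp h).resolve_right hzα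
  have hrel : M 0 0 - M 1 1 = M 0 1 * (t - t⁻¹) := by
    have h3 : (M 0 0 - M 1 1 - M 0 1 * (t - t⁻¹)) *
        ((t ^ α - (t ^ α)⁻¹) * (t - t⁻¹)⁻¹) = 0 := by
      linear_combination e01 - M 0 1 * (t ^ α - (t ^ α)⁻¹) * hs
    have h4 : (t ^ α - (t ^ α)⁻¹) * (t - t⁻¹)⁻¹ ≠ 0 :=
      mul_ne_zero hzα (inv_ne_zero hne)
    have := (mul_eq_zero.mp h3).resolve_right h4
    linarith
  rw [Matrix.eta_fin_two M, hm10]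
  ext i j
  fin_cases i <;> fin_cases j <;>
    (try simp [Matrix.mul_apply, Fin.sum_univ_succ, Cab]) <;>
    first
      | ring1
      | linear_combination ((t ^ ((α:ℝ)/(β:ℝ)) - t ^ (-((α:ℝ)/(β:ℝ)))) * (t - t⁻¹)⁻¹) * hrel
          + (M 0 1 * (t ^ ((α:ℝ)/(β:ℝ)) - t ^ (-((α:ℝ)/(β:ℝ))))) * hs
      | linear_combination (-(t ^ ((α:ℝ)/(β:ℝ)) - t ^ (-((α:ℝ)/(β:ℝ)))) * (t - t⁻¹)⁻¹) * hrel
          - (M 0 1 * (t ^ ((α:ℝ)/(β:ℝ)) - t ^ (-((α:ℝ)/(β:ℝ))))) * hs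
end

section
/- Define P(t,u) to be the Riley polynomial of the 2-bridge knot K(11,3): namely, P(t,u) = A(t,u) − (t − t⁻¹)·B(t,u), where [[A, B],[C', D']] = C^{e₁}D^{e₂}⋯C^{e₉}D^{e₁₀} with C = [[t,1],[0,t⁻¹]], D = [[t,0],[−u,t⁻¹]], and e_i = (−1)^⌊3i/11⌋ for 1 ≤ i ≤ 10. Then for every t ∈ ℝ with t > 0, P(t, (t − t⁻¹)²) = 1. -/
set_option maxRecDepth 8000
set_option maxHeartbeats 2000000


open Matrix

/-- Riley's identity for the 2-bridge knot `K(11,3)`: the Riley polynomial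
`P(t,u) = A(t,u) - (t - t⁻¹)·B(t,u)`, where `[[A,B],[C',D']]` is the word
matrix `C^{e₁}D^{e₂}⋯C^{e₉}D^{e₁₀}` with `e_i = (-1)^⌊3i/11⌋`, satisfies
`P(t, (t - t⁻¹)²) = 1` for all real `t > 0`. -/
theorem riley_identity_K11_3 (t : ℝ) (ht : 0 < t) :
    let u : ℝ := (t - t⁻¹) ^ 2
    let C : Matrix (Fin 2) (Fin 2) ℝ := !![t, 1; 0, t⁻¹]
    let D : Matrix (Fin 2) (Fin 2) ℝ := !![t, 0; -u, t⁻¹]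
    let W : Matrix (Fin 2) (Fin 2) ℝ :=
      (List.ofFn (fun i : Fin 10 =>
        let j : ℕ := (i : ℕ) + 1
        let L : Matrix (Fin 2) (Fin 2) ℝ := if j % 2 = 1 then C else D
        if (-1 : ℤ) ^ (3 * j / 11) = 1 then L else L⁻¹)).prod
    W 0 0 - (t - t⁻¹) * W 0 1 = 1 := by
  intro u C D W
  have ht0 : t ≠ 0 := ne_of_gt ht
  have hC : C⁻¹ = !![t⁻¹, -1; 0, t] := by
    apply inv_eq_right_inv
    show C * _ = 1
    simp only [C]
    rw [Matrix.mul_fin_two, Matrix.one_fin_two]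
    norm_num [mul_inv_cancel₀ ht0, inv_mul_cancel₀ ht0]
  have hD : D⁻¹ = !![t⁻¹, 0; u, t] := by
    apply inv_eq_right_inv
    show D * _ = 1
    simp only [D]
    rw [Matrix.mul_fin_two, Matrix.one_fin_two]
    norm_num [mul_inv_cancel₀ ht0, inv_mul_cancel₀ ht0]
    ring
  have hW : W = C*(D*(C*(D⁻¹*(C⁻¹*(D⁻¹*(C⁻¹*(D*(C*(D*1))))))))) := by
    show (List.ofFn _).prod = _
    simp [List.ofFn_succ, List.prod_cons]
  rw [hW, hC, hD, mul_one]
  simp only [C, D, u, Matrix.mul_fin_two]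
  simp only [Matrix.of_apply, Matrix.cons_val_zero, Matrix.cons_val_one, Matrix.head_cons,
    Matrix.cons_val']
  field_simp
  ring
end
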